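/- If a tuple of relations R is a solution of a semantic dual Horn system, then R j ⊆ ν j for every j : Fin n, where ν j is the complement of the j-th component of the least fixed point of the immediate consequence operator of the system's dualization; that is, ν is the greatest solution. -/

import Mathlib

universe u

/-- A semantic Horn system over `M` with `n` predicate places of arities `k`. -/
structure HornSystem (M : Type u) (n : ℕ) (k : Fin n → ℕ) where
  /-- index type for base clauses -/
  BaseIdx : Type u
  baseTarget : BaseIdx → Fin n
  BaseParam : BaseIdx → Type u
  baseC : (b : BaseIdx) → BaseParam b → Prop
  baseHead : (b : BaseIdx) → BaseParam b → Fin (k (baseTarget b)) → M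
  /-- index type for induction clauses -/
  IndIdx : Type u
  indTarget : IndIdx → Fin n
  IndParam : IndIdx → Type u
  indC : (c : IndIdx) → IndParam c → Prop
  indLen : IndIdx → ℕ
  indLenPos : ∀ c, 1 ≤ indLen c
  indBodyIdx : (c : IndIdx) → Fin (indLen c) → Fin n
  indBody : (c : IndIdx) → (l : Fin (indLen c)) → IndParam c → Fin (k (indBodyIdx c l)) → M
  indHead : (c : IndIdx) → IndParam c → Fin (k (indTarget c)) → M
  /-- index type for end clauses -/
  EndIdx : Type u
  EndParam : EndIdx → Type u
  endC : (e : EndIdx) → EndParam e → Prop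
  endLen : EndIdx → ℕ
  endLenPos : ∀ e, 1 ≤ endLen e
  endBodyIdx : (e : EndIdx) → Fin (endLen e) → Fin n
  endBody : (e : EndIdx) → (l : Fin (endLen e)) → EndParam e → Fin (k (endBodyIdx e l)) → M

namespace HornSystem

variable {M : Type u} {n : ℕ} {k : Fin n → ℕ}

/-- `R` satisfies all base clauses. -/
def SatBase (S : HornSystem M n k) (R : ∀ j, Set (Fin (k j) → M)) : Prop :=
  ∀ b p, S.baseC b p → S.baseHead b p ∈ R (S.baseTarget b)

/-- `R` satisfies all induction clauses. -/
def SatInd (S : HornSystem M n k) (R : ∀ j, Set (Fin (k j) → M)) : Prop :=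
  ∀ c p, S.indC c p → (∀ l, S.indBody c l p ∈ R (S.indBodyIdx c l)) →
    S.indHead c p ∈ R (S.indTarget c)

/-- `R` satisfies all end clauses. -/
def SatEnd (S : HornSystem M n k) (R : ∀ j, Set (Fin (k j) → M)) : Prop :=
  ∀ e, ¬ ∃ p, S.endC e p ∧ ∀ l, S.endBody e l p ∈ R (S.endBodyIdx e l)

/-- `R` is a solution of the system: it satisfies every clause. -/
def IsSolution (S : HornSystem M n k) (R : ∀ j, Set (Fin (k j) → M)) : Prop :=
  S.SatBase R ∧ S.SatInd R ∧ S.SatEnd R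

/-- The immediate consequence operator of the system. -/
def F (S : HornSystem M n k) (R : ∀ j, Set (Fin (k j) → M)) :
    ∀ j, Set (Fin (k j) → M) := fun j =>
  {a | (∃ b, ∃ h : S.baseTarget b = j, ∃ p, S.baseC b p ∧ a = h ▸ S.baseHead b p) ∨
       (∃ c, ∃ h : S.indTarget c = j, ∃ p, S.indC c p ∧
          (∀ l, S.indBody c l p ∈ R (S.indBodyIdx c l)) ∧ a = h ▸ S.indHead c p)}

theorem F_mono (S : HornSystem M n k) : Monotone S.F := by
  intro R R' h j a ha
  rcases ha with ⟨b, hb, p, hC, ha⟩ | ⟨c, hc, p, hC, hbody, ha⟩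
  · exact Or.inl ⟨b, hb, p, hC, ha⟩
  · exact Or.inr ⟨c, hc, p, hC, fun l => h _ (hbody l), ha⟩

/-- The immediate consequence operator, bundled as a monotone map. -/
def Fhom (S : HornSystem M n k) :
    (∀ j, Set (Fin (k j) → M)) →o (∀ j, Set (Fin (k j) → M)) :=
  ⟨S.F, S.F_mono⟩

/-- The least fixed point of the immediate consequence operator
(exists by the Knaster–Tarski theorem). -/
def mu (S : HornSystem M n k) : ∀ j, Set (Fin (k j) → M) :=
  OrderHom.lfp S.Fhom

end HornSystem
/-- A semantic dual Horn system over `M` with `n` predicate places of arities `k`. -/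
structure DualHornSystem (M : Type u) (n : ℕ) (k : Fin n → ℕ) where
  /-- index type of clauses -/
  Idx : Type u
  Param : Idx → Type u
  C : (c : Idx) → Param c → Prop
  /-- at most one body atom: optionally an index `i` together with a body map -/
  body : (c : Idx) → Option ((i : Fin n) × (Param c → Fin (k i) → M))
  hLen : Idx → ℕ
  hIdx : (c : Idx) → Fin (hLen c) → Fin n
  hMap : (c : Idx) → (l : Fin (hLen c)) → Param c → Fin (k (hIdx c l)) → M

namespace DualHornSystem

variable {M : Type u} {n : ℕ} {k : Fin n → ℕ}

/-- `R` is a solution of the dual Horn system: it satisfies every clause. -/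
def IsSolution (D : DualHornSystem M n k) (R : ∀ j, Set (Fin (k j) → M)) : Prop :=
  ∀ c p, D.C c p → (∀ b ∈ D.body c, b.2 p ∈ R b.1) →
    ∃ l, D.hMap c l p ∈ R (D.hIdx c l)

/-- The dualization of a dual Horn system, a semantic Horn system. -/
def dualize (D : DualHornSystem M n k) : HornSystem M n k where
  BaseIdx := {c : D.Idx // (D.body c).isSome ∧ D.hLen c = 0}
  baseTarget := fun b => ((D.body b.1).get b.2.1).1
  BaseParam := fun b => D.Param b.1
  baseC := fun b => D.C b.1
  baseHead := fun b => ((D.body b.1).get b.2.1).2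
  IndIdx := {c : D.Idx // (D.body c).isSome ∧ 1 ≤ D.hLen c}
  indTarget := fun c => ((D.body c.1).get c.2.1).1
  IndParam := fun c => D.Param c.1
  indC := fun c => D.C c.1
  indLen := fun c => D.hLen c.1
  indLenPos := fun c => c.2.2
  indBodyIdx := fun c => D.hIdx c.1
  indBody := fun c => D.hMap c.1
  indHead := fun c => ((D.body c.1).get c.2.1).2
  EndIdx := {c : D.Idx // D.body c = none ∧ 1 ≤ D.hLen c}
  EndParam := fun e => D.Param e.1
  endC := fun e => D.C e.1
  endLen := fun e => D.hLen e.1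
  endLenPos := fun e => e.2.2
  endBodyIdx := fun e => D.hIdx e.1
  endBody := fun e => D.hMap e.1

end DualHornSystem

/-! The complement of a solution `R` of a dual Horn system satisfies the base and induction
clauses of the dualization: each of them is the contrapositive of a clause of `D`, read
with `R` replaced by `Rᶜ`. Hence `Rᶜ` is closed under the immediate consequence operator,
and the least fixed point `μ'` lies below it by Knaster–Tarski. -/

namespace HornSystem

variable {M : Type u} {n : ℕ} {k : Fin n → ℕ} (S : HornSystem M n k)
  {R : ∀ j, Set (Fin (k j) → M)}

theorem F_le_iff : S.F R ≤ R ↔ S.SatBase R ∧ S.SatInd R := by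
  constructor
  · intro hF
    exact ⟨fun b p hC => hF _ (Or.inl ⟨b, rfl, p, hC, rfl⟩),
      fun c p hC hbody => hF _ (Or.inr ⟨c, rfl, p, hC, hbody, rfl⟩)⟩
  · rintro ⟨hB, hI⟩ j a (⟨b, rfl, p, hC, rfl⟩ | ⟨c, rfl, p, hC, hbody, rfl⟩)
    · exact hB b p hC
    · exact hI c p hC hbody

theorem mu_le_of_satBase_of_satInd (hB : S.SatBase R) (hI : S.SatInd R) : S.mu ≤ R :=
  OrderHom.lfp_le S.Fhom ((S.F_le_iff).2 ⟨hB, hI⟩)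

end HornSystem

namespace DualHornSystem

variable {M : Type u} {n : ℕ} {k : Fin n → ℕ} {D : DualHornSystem M n k}
  {R : ∀ j, Set (Fin (k j) → M)}

theorem forall_mem_body_of_isSome {c : D.Idx} (h : (D.body c).isSome) {p : D.Param c}
    (hp : ((D.body c).get h).2 p ∈ R ((D.body c).get h).1) :
    ∀ b ∈ D.body c, b.2 p ∈ R b.1 := by
  rintro b hb
  rwa [Option.get_of_mem h hb] at hp

theorem IsSolution.satBase_dualize_compl (hR : D.IsSolution R) :
    D.dualize.SatBase fun j => (R j)ᶜ := by
  rintro ⟨c, hsome, hlen⟩ p hC hmem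
  obtain ⟨l, -⟩ := hR c p hC (forall_mem_body_of_isSome hsome hmem)
  exact (hlen ▸ l).elim0

theorem IsSolution.satInd_dualize_compl (hR : D.IsSolution R) :
    D.dualize.SatInd fun j => (R j)ᶜ := by
  rintro ⟨c, hsome, _⟩ p hC hheads hmem
  obtain ⟨l, hl⟩ := hR c p hC (forall_mem_body_of_isSome hsome hmem)
  exact hheads l hl

end DualHornSystem

/-- Every solution of a semantic dual Horn system is contained
componentwise in `ν`, where `ν j` is the complement of the `j`-th component of the least
fixed point of the immediate consequence operator of the dualization: `ν` is the
greatest solution. -/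
theorem dualHornSystem_nu_greatest_solution {M : Type u} {n : ℕ} {k : Fin n → ℕ}
    (D : DualHornSystem M n k) (R : ∀ j, Set (Fin (k j) → M)) (hR : D.IsSolution R) :
    ∀ j, R j ⊆ (D.dualize.mu j)ᶜ := by
  have hmu : D.dualize.mu ≤ fun j => (R j)ᶜ :=
    D.dualize.mu_le_of_satBase_of_satInd hR.satBase_dualize_compl hR.satInd_dualize_compl
  exact fun j => Set.subset_compl_comm.1 (hmu j)
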